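/- arXiv:2109.12249 — 5 statements merged into one kernel-verified Lean document; each statement's English description precedes it below -/
import Mathlib

section
/- Let λ = a + b·i with a² + b² ≤ a (equivalently |λ|² ≤ Re λ), let ω ≥ 0, and set μ = ((2−ω)λ + ω)/2. Then |λ| ≤ |μ|. -/
theorem stmt_6 (a b ω : ℝ) (h : a ^ 2 + b ^ 2 ≤ a) (hω : 0 ≤ ω) (lam μ : ℂ)
    (hlam : lam = (a : ℂ) + (b : ℂ) * Complex.I)
    (hμ : μ = ((2 - (ω : ℂ)) * lam + (ω : ℂ)) / 2) :
    ‖lam‖ ≤ ‖μ‖ := by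
  subst hlam hμ
  rw [Complex.norm_def, Complex.norm_def]
  apply Real.sqrt_le_sqrt
  simp [Complex.normSq_apply]
  ring_nf
  nlinarith [sq_nonneg ω, sq_nonneg (ω*b), sq_nonneg (1-a), mul_nonneg hω (sub_nonneg.mpr h), sq_nonneg (ω*(1-a)), sq_nonneg b]
end

section
/- Let λ = a + b·i with a < a² + b² and a² + b² < 1, and let ω satisfy 0 < ω < (4a² − 4a + 4b²)/((1−a)² + b²). Set μ = ((2−ω)λ + ω)/2. Then |μ| < |λ|, and moreover the upper bound (4a² − 4a + 4b²)/((1−a)² + b²) is strictly less than 2. -/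
theorem stmt_7 (a b ω : ℝ) (h1 : a < a ^ 2 + b ^ 2) (h2 : a ^ 2 + b ^ 2 < 1)
    (hω1 : 0 < ω)
    (hω2 : ω < (4 * a ^ 2 - 4 * a + 4 * b ^ 2) / ((1 - a) ^ 2 + b ^ 2))
    (lam μ : ℂ)
    (hlam : lam = (a : ℂ) + (b : ℂ) * Complex.I)
    (hμ : μ = ((2 - (ω : ℂ)) * lam + (ω : ℂ)) / 2) :
    ‖μ‖ < ‖lam‖ ∧
      (4 * a ^ 2 - 4 * a + 4 * b ^ 2) / ((1 - a) ^ 2 + b ^ 2) < 2 := by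
  have hD : 0 < (1 - a) ^ 2 + b ^ 2 := by nlinarith
  have hN : ω * ((1 - a) ^ 2 + b ^ 2) < 4 * a ^ 2 - 4 * a + 4 * b ^ 2 :=
    (lt_div_iff₀ hD).mp hω2
  constructor
  · have hsq : ‖μ‖ ^ 2 < ‖lam‖ ^ 2 := by
      rw [Complex.sq_norm, Complex.sq_norm, hμ, hlam]
      simp [Complex.normSq_apply, Complex.div_re, Complex.div_im, Complex.normSq,
        Complex.add_re, Complex.add_im, Complex.mul_re, Complex.mul_im]
      ring_nf
      nlinarith [sq_nonneg ω, mul_pos hω1 hD]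
    exact lt_of_pow_lt_pow_left₀ 2 (norm_nonneg _) hsq
  · rw [div_lt_iff₀ hD]; nlinarith
end

section
/- Let p > 0 and λ_min > 0 be real. Define f(α) = (α² + p)/(α(α + λ_min)) for α > 0. Then f attains its minimum on (0,∞) at α* = (p + √(p² + λ_min²·p))/λ_min, i.e., f(α) ≥ f(α*) for all α > 0. -/
/-! The critical-point equation of `α ↦ (α² + p) / (α (α + λ))` is the quadratic
`λ α² = 2 p α + λ p`, whose positive root is `α*`. At such a root the function takes the value
`2 α* / (2 α* + λ)` (the ratio of the derivatives of numerator and denominator), and the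
difference `f α - 2 α* / (2 α* + λ)` is the perfect square `λ (α - α*)²` over a positive
denominator. -/

section QuasiOptimal

variable {p l a : ℝ}

theorem mul_sq_eq_of_eq_div_add_sqrt (hl : l ≠ 0) (hdisc : 0 ≤ p ^ 2 + l ^ 2 * p)
    (ha : a = (p + Real.sqrt (p ^ 2 + l ^ 2 * p)) / l) :
    l * a ^ 2 = 2 * p * a + l * p := by
  set s := Real.sqrt (p ^ 2 + l ^ 2 * p)
  have hs : s ^ 2 = p ^ 2 + l ^ 2 * p := Real.sq_sqrt hdisc
  have hla : l * a = p + s := by rw [ha, mul_div_cancel₀ _ hl]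
  apply mul_left_cancel₀ hl
  linear_combination (l * a + s - p) * hla + hs

theorem sq_add_div_sub_div_eq_of_mul_sq_eq (ha : l * a ^ 2 = 2 * p * a + l * p) {α : ℝ}
    (hα : α * (α + l) ≠ 0) (hal : 2 * a + l ≠ 0) :
    (α ^ 2 + p) / (α * (α + l)) - 2 * a / (2 * a + l)
      = l * (α - a) ^ 2 / ((2 * a + l) * (α * (α + l))) := by
  rw [div_sub_div _ _ hα hal, div_eq_div_iff (mul_ne_zero hα hal) (mul_ne_zero hal hα)]
  linear_combination (-(2 * a + l) * (α * (α + l))) * ha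

theorem div_le_sq_add_div_of_mul_sq_eq (ha : l * a ^ 2 = 2 * p * a + l * p) (hl : 0 ≤ l) {α : ℝ}
    (hα : 0 < α * (α + l)) (hal : 0 < 2 * a + l) :
    2 * a / (2 * a + l) ≤ (α ^ 2 + p) / (α * (α + l)) := by
  rw [← sub_nonneg, sq_add_div_sub_div_eq_of_mul_sq_eq ha hα.ne' hal.ne']
  positivity

theorem sq_add_div_eq_div_of_mul_sq_eq (ha : l * a ^ 2 = 2 * p * a + l * p)
    (ha' : a * (a + l) ≠ 0) (hal : 2 * a + l ≠ 0) :
    (a ^ 2 + p) / (a * (a + l)) = 2 * a / (2 * a + l) := by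
  rw [← sub_eq_zero, sq_add_div_sub_div_eq_of_mul_sq_eq ha ha' hal, sub_self]
  simp

end QuasiOptimal

theorem stmt_9 (p lmin : ℝ) (hp : 0 < p) (hl : 0 < lmin)
    (f : ℝ → ℝ) (hf : ∀ α, f α = (α ^ 2 + p) / (α * (α + lmin)))
    (αstar : ℝ) (hαstar : αstar = (p + Real.sqrt (p ^ 2 + lmin ^ 2 * p)) / lmin) :
    ∀ α : ℝ, 0 < α → f αstar ≤ f α := by
  intro α hα
  have hroot : lmin * αstar ^ 2 = 2 * p * αstar + lmin * p :=
    mul_sq_eq_of_eq_div_add_sqrt hl.ne' (by positivity) hαstar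
  have hαstar_pos : 0 < αstar := by rw [hαstar]; positivity
  rw [hf, hf, sq_add_div_eq_div_of_mul_sq_eq hroot (by positivity) (by positivity)]
  exact div_le_sq_add_div_of_mul_sq_eq hroot hl.le (by positivity) (by positivity)
end

section
/- Let p > 0 and λ_min > 0, and set α* = (p + √(p² + λ_min²·p))/λ_min. Then ((α*)² + p)/(α*(α* + λ_min)) = (2p² + 2λ_min²p + 2p√(p² + λ_min²p)) / (2p² + 2λ_min²p + 2p√(p² + λ_min²p) + λ_min²√(p² + λ_min²p)), and this value is strictly less than 1. -/
theorem stmt_10 (p lmin : ℝ) (hp : 0 < p) (hl : 0 < lmin)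
    (αstar : ℝ) (hαstar : αstar = (p + Real.sqrt (p ^ 2 + lmin ^ 2 * p)) / lmin) :
    (αstar ^ 2 + p) / (αstar * (αstar + lmin)) =
      (2 * p ^ 2 + 2 * lmin ^ 2 * p + 2 * p * Real.sqrt (p ^ 2 + lmin ^ 2 * p)) /
        (2 * p ^ 2 + 2 * lmin ^ 2 * p + 2 * p * Real.sqrt (p ^ 2 + lmin ^ 2 * p) +
          lmin ^ 2 * Real.sqrt (p ^ 2 + lmin ^ 2 * p)) ∧
    (αstar ^ 2 + p) / (αstar * (αstar + lmin)) < 1 := by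
  have hs0 : 0 < p ^ 2 + lmin ^ 2 * p := by positivity
  set s := Real.sqrt (p ^ 2 + lmin ^ 2 * p) with hsdef
  have hs : 0 < s := Real.sqrt_pos.mpr hs0
  have hs2 : s ^ 2 = p ^ 2 + lmin ^ 2 * p := Real.sq_sqrt hs0.le
  have hα : 0 < αstar := by
    rw [hαstar]; positivity
  have hnum : αstar ^ 2 + p = (2 * p ^ 2 + 2 * lmin ^ 2 * p + 2 * p * s) / lmin ^ 2 := by
    rw [hαstar]
    field_simp
    nlinarith [hs2]
  have hden : αstar * (αstar + lmin) =
      (2 * p ^ 2 + 2 * lmin ^ 2 * p + 2 * p * s + lmin ^ 2 * s) / lmin ^ 2 := by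
    rw [hαstar]
    field_simp
    nlinarith [hs2]
  have hD : 0 < 2 * p ^ 2 + 2 * lmin ^ 2 * p + 2 * p * s + lmin ^ 2 * s := by positivity
  have key : (αstar ^ 2 + p) / (αstar * (αstar + lmin)) =
      (2 * p ^ 2 + 2 * lmin ^ 2 * p + 2 * p * s) /
        (2 * p ^ 2 + 2 * lmin ^ 2 * p + 2 * p * s + lmin ^ 2 * s) := by
    rw [hnum, hden]
    rw [div_div_div_eq]
    rw [mul_comm (lmin ^ 2)]
    exact mul_div_mul_right _ _ (by positivity)
  refine ⟨key, ?_⟩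
  rw [key, div_lt_one hD]
  nlinarith [mul_pos (pow_pos hl 2) hs]
end

section
/- Let λ_min, λ_max be positive reals with λ_min ≤ λ_max. Then the function σ(α) = max over λ ∈ [λ_min, λ_max] of |(α − λ)/(α + λ)|, defined for α > 0, attains its minimum at α* = √(λ_min·λ_max), with σ(α*) = (√λ_max − √λ_min)/(√λ_max + √λ_min). -/
theorem stmt_11 (lmin lmax : ℝ) (h1 : 0 < lmin) (h2 : 0 < lmax) (h3 : lmin ≤ lmax)
    (σ : ℝ → ℝ)
    (hσ : ∀ α, σ α = ⨆ l : Set.Icc lmin lmax, |(α - (l : ℝ)) / (α + (l : ℝ))|)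
    (αstar : ℝ) (hαstar : αstar = Real.sqrt (lmin * lmax)) :
    (∀ α : ℝ, 0 < α → σ αstar ≤ σ α) ∧
      σ αstar = (Real.sqrt lmax - Real.sqrt lmin) / (Real.sqrt lmax + Real.sqrt lmin) := by
  have hs : 0 < Real.sqrt lmin := Real.sqrt_pos.mpr h1
  have ht : 0 < Real.sqrt lmax := Real.sqrt_pos.mpr h2
  have hst : Real.sqrt lmin ≤ Real.sqrt lmax := Real.sqrt_le_sqrt h3
  set s := Real.sqrt lmin with hsdef
  set t := Real.sqrt lmax with htdef
  have hs2 : s ^ 2 = lmin := Real.sq_sqrt h1.le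
  have ht2 : t ^ 2 = lmax := Real.sq_sqrt h2.le
  have hg : αstar = s * t := by rw [hαstar, Real.sqrt_mul h1.le]
  have hgpos : 0 < αstar := by rw [hg]; positivity
  set τ := (t - s) / (t + s) with hτdef
  have hne : Nonempty (Set.Icc lmin lmax) := ⟨⟨lmin, le_refl _, h3⟩⟩
  -- Every term at αstar is ≤ τ
  have hbound : ∀ l : Set.Icc lmin lmax, |(αstar - (l : ℝ)) / (αstar + (l : ℝ))| ≤ τ := by
    rintro ⟨l, hl1, hl2⟩
    have hlpos : 0 < l := lt_of_lt_of_le h1 hl1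
    have hden : (0:ℝ) < αstar + l := by linarith
    have hts : (0:ℝ) < t + s := by linarith
    show |(αstar - l) / (αstar + l)| ≤ τ
    rw [abs_div, abs_of_pos hden, hτdef, div_le_div_iff₀ hden hts]
    rcases abs_cases (αstar - l) with ⟨he, _⟩ | ⟨he, _⟩ <;> rw [he, hg] <;>
      nlinarith [mul_nonneg ht.le (sub_nonneg.mpr (hs2 ▸ hl1)),
        mul_nonneg hs.le (sub_nonneg.mpr (ht2 ▸ hl2))]
  have hbdd : BddAbove (Set.range fun l : Set.Icc lmin lmax =>
      |(αstar - (l : ℝ)) / (αstar + (l : ℝ))|) := by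
    refine ⟨τ, ?_⟩
    rintro x ⟨i, rfl⟩
    exact hbound i
  -- value at l = lmin equals τ
  have hval : |(αstar - lmin) / (αstar + lmin)| = τ := by
    have hden : (0:ℝ) < αstar + lmin := by linarith
    have hnum : (0:ℝ) ≤ αstar - lmin := by
      rw [hg]; nlinarith [hs2, mul_le_mul_of_nonneg_left hst hs.le]
    rw [abs_of_nonneg (div_nonneg hnum hden.le), hτdef,
      div_eq_div_iff hden.ne' (by positivity : t + s ≠ 0), hg]
    linear_combination (2 * t) * hs2
  have hτval : σ αstar = τ := by
    rw [hσ]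
    apply le_antisymm
    · exact ciSup_le hbound
    · exact le_ciSup_of_le hbdd ⟨lmin, le_refl _, h3⟩ (le_of_eq hval.symm)
  refine ⟨?_, hτval⟩
  intro α hα
  rw [hτval, hσ]
  -- terms at α are bounded by 1
  have hbdd1 : BddAbove (Set.range fun l : Set.Icc lmin lmax =>
      |(α - (l : ℝ)) / (α + (l : ℝ))|) := by
    refine ⟨1, ?_⟩
    rintro x ⟨⟨l, hl1, hl2⟩, rfl⟩
    have hlpos : 0 < l := lt_of_lt_of_le h1 hl1
    have hden : (0:ℝ) < α + l := by linarith
    show |(α - l) / (α + l)| ≤ 1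
    rw [abs_div, abs_of_pos hden, div_le_one hden]
    rcases abs_cases (α - l) with ⟨he, _⟩ | ⟨he, _⟩ <;> rw [he] <;> linarith
  have hts : (0:ℝ) < t + s := by linarith
  rcases le_total α (s * t) with hcase | hcase
  · -- use l = lmax
    refine le_ciSup_of_le hbdd1 ⟨lmax, h3, le_refl _⟩ ?_
    have hden : (0:ℝ) < α + lmax := by linarith
    have h4 : (lmax - α) / (α + lmax) ≤ |(α - lmax) / (α + lmax)| := by
      rw [abs_div, abs_of_pos hden]
      gcongr
      rw [abs_sub_comm]
      exact le_abs_self _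
    refine le_trans ?_ h4
    rw [hτdef, div_le_div_iff₀ hts hden]
    nlinarith [mul_nonneg ht.le (sub_nonneg.mpr hcase), ht2]
  · -- use l = lmin
    refine le_ciSup_of_le hbdd1 ⟨lmin, le_refl _, h3⟩ ?_
    have hden : (0:ℝ) < α + lmin := by linarith
    have h4 : (α - lmin) / (α + lmin) ≤ |(α - lmin) / (α + lmin)| := by
      rw [abs_div, abs_of_pos hden]
      gcongr
      exact le_abs_self _
    refine le_trans ?_ h4
    rw [hτdef, div_le_div_iff₀ hts hden]
    nlinarith [mul_nonneg hs.le (sub_nonneg.mpr hcase), hs2]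
end
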